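/- arXiv:1004.4843 — 3 statements merged into one kernel-verified Lean document; each statement's English description precedes it below -/
import Mathlib

section
/- Let λ ∈ ℂ with Im λ > 0 and let C > 0. For z₁, z₂ ∈ ℍ with |z₁|, |z₂| < C, the Möbius map Φ(z) = -1/(z + λ - q) (q ∈ ℝ) satisfies d(Φ(z₁), Φ(z₂)) ≤ δ · d(z₁, z₂) with δ = C/(C + Im λ) < 1. -/
/-!
Write `Φ z = -1 / (z + i Im λ + (Re λ - q))`. Real translations and `w ↦ -1/w` preserve `hdist`, so
with `τ = Im λ` it suffices to show that `t ↦ (C + t) · hdist (z₁ + i t) (z₂ + i t)` is antitone on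
`[0, ∞)`. With `x = cosh d` and `y₁, y₂` the heights of the translated points, its derivative is
`d - (C + t) (1/y₁ + 1/y₂) (x - 1) / √(x² - 1)`. This is nonpositive because
`arcosh x ≤ √(2(x - 1))` and `2(x + 1) ≤ (C + t)² (1/y₁ + 1/y₂)²`; the latter holds since the
translated points lie in the half-disc of radius `C + t`, and for points `z, w` of norm at most `C`
the parallelogram law gives `‖z - w‖² + (Im z + Im w)² ≤ 4C²`.
-/

/-- Inverse hyperbolic cosine. -/
noncomputable def arcosh (x : ℝ) : ℝ := Real.log (x + Real.sqrt (x ^ 2 - 1))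

/-- Hyperbolic (Poincaré) distance on the upper half-plane. -/
noncomputable def hdist (z w : ℂ) : ℝ :=
  arcosh (1 + ‖z - w‖ ^ 2 / (2 * z.im * w.im))

open Complex

namespace Real

lemma arcosh_le_sqrt {x : ℝ} (hx : 1 ≤ x) : arcosh x ≤ √(2 * (x - 1)) := by
  set y := arcosh x
  have hcosh : 2 * (x - 1) = (2 * sinh (y / 2)) ^ 2 := by
    have hxy : x = cosh (2 * (y / 2)) := by rw [mul_div_cancel₀ y two_ne_zero, cosh_arcosh hx]
    rw [hxy, cosh_two_mul, cosh_sq]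
    ring
  have hsinh : y / 2 ≤ sinh (y / 2) := self_le_sinh_iff.2 (by linarith [arcosh_nonneg hx])
  rw [hcosh, sqrt_sq (by linarith [arcosh_nonneg hx])]
  linarith

lemma arcosh_mul_sqrt_le {x K : ℝ} (hx : 1 ≤ x) (hK : 0 ≤ K) (h : 2 * (x + 1) ≤ K ^ 2) :
    arcosh x * √(x ^ 2 - 1) ≤ K * (x - 1) :=
  calc arcosh x * √(x ^ 2 - 1) ≤ √(2 * (x - 1)) * √(x ^ 2 - 1) := by
        gcongr; exact arcosh_le_sqrt hx
    _ = (x - 1) * √(2 * (x + 1)) := by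
        rw [← sqrt_mul (by linarith),
          show 2 * (x - 1) * (x ^ 2 - 1) = (x - 1) ^ 2 * (2 * (x + 1)) by ring,
          sqrt_mul (sq_nonneg _), sqrt_sq (by linarith)]
    _ ≤ (x - 1) * K := by
        gcongr
        simpa [sqrt_sq hK] using sqrt_le_sqrt h
    _ = K * (x - 1) := mul_comm _ _

end Real

noncomputable def coshHdist (z w : ℂ) : ℝ := 1 + ‖z - w‖ ^ 2 / (2 * z.im * w.im)

lemma one_le_coshHdist {z w : ℂ} (hz : 0 < z.im) (hw : 0 < w.im) : 1 ≤ coshHdist z w := by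
  unfold coshHdist
  have : 0 ≤ ‖z - w‖ ^ 2 / (2 * z.im * w.im) := by positivity
  linarith

lemma one_lt_coshHdist {z w : ℂ} (hz : 0 < z.im) (hw : 0 < w.im) (hne : z ≠ w) :
    1 < coshHdist z w := by
  have : 0 < ‖z - w‖ := norm_pos_iff.2 (sub_ne_zero.2 hne)
  unfold coshHdist
  have : 0 < ‖z - w‖ ^ 2 / (2 * z.im * w.im) := by positivity
  linarith

lemma hdist_self (z : ℂ) : hdist z z = 0 := by simp [hdist, arcosh]

lemma hdist_add_ofReal (z w : ℂ) (r : ℝ) : hdist (z + r) (w + r) = hdist z w := by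
  simp [hdist]

lemma hdist_neg_one_div {z w : ℂ} (hz : z ≠ 0) (hw : w ≠ 0) :
    hdist (-1 / z) (-1 / w) = hdist z w := by
  have hdiff : -1 / z - -1 / w = (z - w) / (z * w) := by field_simp; ring
  have him : ∀ u : ℂ, (-1 / u).im = u.im / ‖u‖ ^ 2 := fun u => by
    simp [neg_div, inv_im, Complex.sq_norm]
  have hz' : ‖z‖ ≠ 0 := norm_ne_zero_iff.2 hz
  have hw' : ‖w‖ ≠ 0 := norm_ne_zero_iff.2 hw
  simp only [hdist, hdiff, him, norm_div, norm_mul]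
  congr 2
  field_simp

lemma norm_sub_sq_add_im_add_sq_le {z w : ℂ} {C : ℝ} (hzC : ‖z‖ ≤ C) (hwC : ‖w‖ ≤ C) :
    ‖z - w‖ ^ 2 + (z.im + w.im) ^ 2 ≤ 4 * C ^ 2 := by
  have hpar := parallelogram_law_with_norm ℝ z w
  have : (z.im + w.im) ^ 2 ≤ ‖z + w‖ ^ 2 :=
    sq_le_sq.2 (by simpa using abs_im_le_norm (z + w))
  have hz0 : 0 ≤ ‖z‖ := norm_nonneg _
  have hw0 : 0 ≤ ‖w‖ := norm_nonneg _
  nlinarith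

lemma two_mul_coshHdist_add_one_le {z w : ℂ} {C : ℝ} (hz : 0 < z.im) (hw : 0 < w.im)
    (hzC : ‖z‖ ≤ C) (hwC : ‖w‖ ≤ C) :
    2 * (coshHdist z w + 1) ≤ (C * (1 / z.im + 1 / w.im)) ^ 2 := by
  have hsum := norm_sub_sq_add_im_add_sq_le hzC hwC
  have hab : 0 < z.im * w.im := mul_pos hz hw
  have key : ‖z - w‖ ^ 2 * (z.im * w.im) + 4 * (z.im * w.im) ^ 2
      ≤ C ^ 2 * (z.im + w.im) ^ 2 := by
    nlinarith [sq_nonneg (z.im - w.im), mul_nonneg hab.le (sq_nonneg (z.im - w.im))]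
  have hL : 2 * (coshHdist z w + 1)
      = (‖z - w‖ ^ 2 * (z.im * w.im) + 4 * (z.im * w.im) ^ 2) / (z.im * w.im) ^ 2 := by
    unfold coshHdist; field_simp; ring
  have hR : (C * (1 / z.im + 1 / w.im)) ^ 2
      = C ^ 2 * (z.im + w.im) ^ 2 / (z.im * w.im) ^ 2 := by
    field_simp; ring
  rw [hL, hR]
  gcongr

lemma hdist_mul_sqrt_le {z w : ℂ} {C : ℝ} (hz : 0 < z.im) (hw : 0 < w.im)
    (hzC : ‖z‖ ≤ C) (hwC : ‖w‖ ≤ C) :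
    hdist z w * √(coshHdist z w ^ 2 - 1) ≤ C * (1 / z.im + 1 / w.im) * (coshHdist z w - 1) :=
  -- `hdist z w` unfolds to `Real.arcosh (coshHdist z w)`
  Real.arcosh_mul_sqrt_le (one_le_coshHdist hz hw)
    (mul_nonneg ((norm_nonneg z).trans hzC) (by positivity))
    (two_mul_coshHdist_add_one_le hz hw hzC hwC)

lemma coshHdist_add_mul_I (z w : ℂ) (t : ℝ) :
    coshHdist (z + t * I) (w + t * I) = 1 + ‖z - w‖ ^ 2 / (2 * (z.im + t) * (w.im + t)) := by
  simp [coshHdist]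

lemma hasDerivAt_coshHdist_add_mul_I (z w : ℂ) {τ : ℝ} (hz : 0 < z.im + τ)
    (hw : 0 < w.im + τ) :
    HasDerivAt (fun t : ℝ => coshHdist (z + t * I) (w + t * I))
      (-(coshHdist (z + τ * I) (w + τ * I) - 1) * (1 / (z.im + τ) + 1 / (w.im + τ))) τ := by
  simp only [coshHdist_add_mul_I]
  have hden : HasDerivAt (fun t : ℝ => 2 * (z.im + t) * (w.im + t))
      (2 * (w.im + τ) + 2 * (z.im + τ)) τ :=
    ((((hasDerivAt_id τ).const_add z.im).const_mul 2).mul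
      ((hasDerivAt_id τ).const_add w.im)).congr_deriv (by simp only [id]; ring)
  refine (((hasDerivAt_const τ (‖z - w‖ ^ 2)).div hden (by positivity)).const_add 1).congr_deriv ?_
  field_simp
  ring

lemma hasDerivAt_hdist_add_mul_I {z w : ℂ} (hne : z ≠ w) {τ : ℝ} (hz : 0 < z.im + τ)
    (hw : 0 < w.im + τ) :
    HasDerivAt (fun t : ℝ => hdist (z + t * I) (w + t * I))
      ((√(coshHdist (z + τ * I) (w + τ * I) ^ 2 - 1))⁻¹ *
        (-(coshHdist (z + τ * I) (w + τ * I) - 1) * (1 / (z.im + τ) + 1 / (w.im + τ)))) τ := by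
  have hx : 1 < coshHdist (z + τ * I) (w + τ * I) :=
    one_lt_coshHdist (by simpa using hz) (by simpa using hw) (by simpa using hne)
  exact (Real.hasDerivAt_arcosh hx).comp τ (hasDerivAt_coshHdist_add_mul_I z w hz hw)

theorem add_mul_hdist_add_mul_I_le {z w : ℂ} {C τ : ℝ} (hz : 0 < z.im) (hw : 0 < w.im)
    (hzC : ‖z‖ ≤ C) (hwC : ‖w‖ ≤ C) (hτ : 0 ≤ τ) :
    (C + τ) * hdist (z + τ * I) (w + τ * I) ≤ C * hdist z w := by
  rcases eq_or_ne z w with rfl | hne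
  · simp [hdist_self]
  set x : ℝ → ℝ := fun t => coshHdist (z + t * I) (w + t * I)
  set g' : ℝ → ℝ := fun t => hdist (z + t * I) (w + t * I) + (C + t) *
    ((√(x t ^ 2 - 1))⁻¹ * (-(x t - 1) * (1 / (z.im + t) + 1 / (w.im + t))))
  have hderiv : ∀ t ∈ Set.Ici (0 : ℝ),
      HasDerivAt (fun t : ℝ => (C + t) * hdist (z + t * I) (w + t * I)) (g' t) t :=
    fun t (ht : 0 ≤ t) =>
      (((hasDerivAt_id t).const_add C).mul
        (hasDerivAt_hdist_add_mul_I hne (by linarith) (by linarith))).congr_deriv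
        (by simp only [id, g', x]; ring)
  have hg' : ∀ t ∈ Set.Ici (0 : ℝ), g' t ≤ 0 := fun t (ht : 0 ≤ t) => by
    have him : ∀ u : ℂ, (u + t * I).im = u.im + t := fun u => by simp
    have hnorm : ∀ u : ℂ, ‖u‖ ≤ C → ‖u + t * I‖ ≤ C + t := fun u hu =>
      (norm_add_le _ _).trans (by simpa [abs_of_nonneg ht] using hu)
    have hz' : 0 < (z + t * I).im := by rw [him]; linarith
    have hw' : 0 < (w + t * I).im := by rw [him]; linarith
    have hsqrt : 0 < √(x t ^ 2 - 1) :=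
      Real.sqrt_pos.2 (by nlinarith [one_lt_coshHdist hz' hw' (by simpa using hne)])
    have hmain := hdist_mul_sqrt_le hz' hw' (hnorm z hzC) (hnorm w hwC)
    rw [him, him, ← le_div_iff₀ hsqrt, div_eq_mul_inv] at hmain
    simp only [g', x]
    linarith
  have hanti := antitoneOn_of_hasDerivWithinAt_nonpos (convex_Ici 0)
    (fun t ht => (hderiv t ht).continuousAt.continuousWithinAt)
    (fun t ht => (hderiv t (interior_subset ht)).hasDerivWithinAt)
    (fun t ht => hg' t (interior_subset ht))
  simpa using hanti Set.self_mem_Ici hτ hτ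

theorem moebius_strict_contraction_general (lam : ℂ) (q C : ℝ) (hlam : 0 < lam.im)
    (z₁ z₂ : ℂ) (h1 : 0 < z₁.im) (h2 : 0 < z₂.im)
    (hb1 : ‖z₁‖ < C) (hb2 : ‖z₂‖ < C) :
    hdist (-1 / (z₁ + lam - (q : ℂ))) (-1 / (z₂ + lam - (q : ℂ)))
        ≤ (C / (C + lam.im)) * hdist z₁ z₂ ∧ C / (C + lam.im) < 1 := by
  have hC : 0 < C := (norm_nonneg z₁).trans_lt hb1
  have hshift : ∀ z : ℂ, z + lam - q = z + lam.im * I + ((lam.re - q : ℝ) : ℂ) := fun z => by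
    conv_lhs => rw [← re_add_im lam]
    push_cast; ring
  have him : ∀ z : ℂ, (z + lam.im * I + ((lam.re - q : ℝ) : ℂ)).im = z.im + lam.im := fun z => by
    simp
  have hne : ∀ z : ℂ, 0 < z.im → z + lam.im * I + ((lam.re - q : ℝ) : ℂ) ≠ 0 := fun z hz =>
    ne_of_apply_ne im (by rw [him, zero_im]; linarith)
  refine ⟨?_, (div_lt_one (by positivity)).2 (by linarith)⟩
  rw [hshift, hshift, hdist_neg_one_div (hne z₁ h1) (hne z₂ h2), hdist_add_ofReal,
    div_mul_eq_mul_div, le_div_iff₀ (by positivity), mul_comm]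
  exact add_mul_hdist_add_mul_I_le h1 h2 hb1.le hb2.le hlam.le

/-- For Im λ > 0 and |z₁|, |z₂| < C, the Möbius map Φ(z) = -1/(z+λ-q) is a
strict hyperbolic contraction with factor δ = C/(C + Im λ) < 1. -/
theorem moebius_strict_contraction (lam : ℂ) (q C : ℝ) (hlam : 0 < lam.im)
    (hC : 0 < C) (z₁ z₂ : ℂ) (h1 : 0 < z₁.im) (h2 : 0 < z₂.im)
    (hb1 : ‖z₁‖ < C) (hb2 : ‖z₂‖ < C) :
    hdist (-1 / (z₁ + lam - (q : ℂ))) (-1 / (z₂ + lam - (q : ℂ)))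
        ≤ (C / (C + lam.im)) * hdist z₁ z₂ ∧ C / (C + lam.im) < 1 :=
  moebius_strict_contraction_general lam q C hlam z₁ z₂ h1 h2 hb1 hb2
end

section
/- For λ ∈ ℍ, the fixed point equation z = -1/(z + λ) has exactly one solution in the upper half-plane, namely z₊(λ) = -λ/2 + i·√(1 - λ²/4) (principal square root), and the other root -λ/2 - i·√(1 - λ²/4) lies in the lower half-plane. -/
open Complex

/-- For λ ∈ ℍ the fixed point equation z = -1/(z+λ) has exactly one solution in
the upper half-plane, namely z₊(λ) = -λ/2 + i√(1 - λ²/4) (principal square root);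
the other root lies in the lower half-plane. -/
theorem fixed_point_upper_half_plane (lam : ℂ) (hlam : 0 < lam.im) :
    (-lam / 2 + Complex.I * ((1 - lam ^ 2 / 4) ^ ((1 : ℂ) / 2)))
        = -1 / ((-lam / 2 + Complex.I * ((1 - lam ^ 2 / 4) ^ ((1 : ℂ) / 2))) + lam) ∧
    0 < (-lam / 2 + Complex.I * ((1 - lam ^ 2 / 4) ^ ((1 : ℂ) / 2))).im ∧
    (-lam / 2 - Complex.I * ((1 - lam ^ 2 / 4) ^ ((1 : ℂ) / 2))).im < 0 ∧
    ∀ z : ℂ, 0 < z.im → z = -1 / (z + lam) →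
      z = -lam / 2 + Complex.I * ((1 - lam ^ 2 / 4) ^ ((1 : ℂ) / 2)) := by
  set s : ℂ := (1 - lam ^ 2 / 4) ^ ((1 : ℂ) / 2) with hs
  have h0 : (1 - lam ^ 2 / 4) ≠ 0 := by
    intro h
    have h2 : (lam - 2) * (lam + 2) = 0 := by linear_combination (-4 : ℂ) * h
    rcases mul_eq_zero.mp h2 with h | h
    · have h3 : lam = 2 := by linear_combination h
      rw [h3] at hlam; simp at hlam
    · have h3 : lam = -2 := by linear_combination h
      rw [h3] at hlam; simp at hlam
  have hs2 : s * s = 1 - lam ^ 2 / 4 := by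
    rw [hs, ← Complex.cpow_add _ _ h0]
    norm_num
  have hre : 0 ≤ s.re := by
    rw [hs, show ((1 : ℂ) / 2) = (2⁻¹ : ℂ) by norm_num, Complex.cpow_inv_two_re]
    positivity
  have hu : 0 < s.re + lam.im / 2 := by positivity
  have hre2 : (s - Complex.I * (lam / 2)).re = s.re + lam.im / 2 := by
    simp [Complex.sub_re, Complex.mul_re]
    try ring
  have hunz : s - Complex.I * (lam / 2) ≠ 0 := by
    intro h
    rw [h] at hre2; simp at hre2; linarith
  have hinv : s + Complex.I * (lam / 2) = (s - Complex.I * (lam / 2))⁻¹ := by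
    apply eq_inv_of_mul_eq_one_left
    linear_combination hs2 - (lam ^ 2 / 4) * Complex.I_sq
  have hkey : 0 < s.re - lam.im / 2 := by
    have h1 : (s + Complex.I * (lam / 2)).re = s.re - lam.im / 2 := by
      simp [Complex.add_re, Complex.mul_re]
      ring
    have h2 : 0 < ((s - Complex.I * (lam / 2))⁻¹).re := by
      rw [Complex.inv_re, hre2]
      exact div_pos hu (Complex.normSq_pos.mpr hunz)
    rw [← h1, hinv]; exact h2
  have himp : (-lam / 2 + Complex.I * s).im = s.re - lam.im / 2 := by
    simp [Complex.add_im, Complex.mul_im]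
    try ring
  have himm : (-lam / 2 - Complex.I * s).im = -(s.re + lam.im / 2) := by
    simp [Complex.sub_im, Complex.mul_im]
    try ring
  refine ⟨?_, by rw [himp]; exact hkey, by rw [himm]; linarith, ?_⟩
  · have hne : (-lam / 2 + Complex.I * s) + lam ≠ 0 := by
      intro h
      have h2 := congrArg Complex.im h
      rw [Complex.add_im, himp] at h2
      simp at h2
      linarith
    rw [eq_div_iff hne]
    linear_combination (s * s) * Complex.I_sq - hs2
  · intro z hz hfix
    have hzne : z + lam ≠ 0 := by
      intro h
      have h2 := congrArg Complex.im h
      simp [Complex.add_im] at h2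
      linarith
    rw [eq_div_iff hzne] at hfix
    have hquad : z * z + lam * z + 1 = 0 := by linear_combination hfix
    have hfact : (z - (-lam / 2 + Complex.I * s)) * (z - (-lam / 2 - Complex.I * s)) = 0 := by
      linear_combination hquad - s ^ 2 * Complex.I_sq + hs2
    rcases mul_eq_zero.mp hfact with h | h
    · exact sub_eq_zero.mp h
    · exfalso
      have h2 : z = -lam / 2 - Complex.I * s := sub_eq_zero.mp h
      have h3 : z.im = -(s.re + lam.im / 2) := by rw [h2, himm]
      linarith
end

section
/- Let z₁, z₂ ∈ ℍ, let z_λ ∈ ℍ, and define cd(z) = |z - z_λ|²/Im(z). Define Ψ(z₁,z₂) = -1/(z₁ + z₂ + λ) where λ ∈ ℝ satisfies z_λ = -1/(2z_λ + λ). Then with u_i = (z_i - z_λ)/√(Im z_i) and v = (√(y₁/(y₁+y₂)), √(y₂/(y₁+y₂))) (y_i = Im z_i), one has cd(Ψ(z₁,z₂)) = (1/2)·|z₁ + z₂ - 2z_λ|²/(y₁ + y₂) = (1/2)|⟨u, v⟩|², where ⟨u,v⟩ = u₁v₁ + u₂v₂. -/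
/-!
Since `z_λ (2 z_λ + λ) = -1`, subtracting `z_λ` from `Ψ = -1/w` (with `w = z₁ + z₂ + λ`) gives
`Ψ - z_λ = -z_λ (w - 2 z_λ - λ) / w`, and `Im Ψ = Im w / |w|²`; the factors `|w|²` cancel in `cd Ψ`.
Taking imaginary parts in `2 z_λ + λ = -1/z_λ` gives `2 Im z_λ = Im z_λ / |z_λ|²`, i.e. `|z_λ|² = 1/2`.
The second identity is the observation `u_i v_i = (z_i - z_λ)/√(y₁ + y₂)`.
-/

namespace Complex

lemma im_neg_one_div (w : ℂ) : (-1 / w).im = w.im / normSq w := by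
  rw [neg_div, one_div, neg_im, inv_im, neg_div, neg_neg]

lemma normSq_eq_half_of_mul_eq_neg_one {zl : ℂ} {l : ℝ} (hzl : 0 < zl.im)
    (hmul : zl * (2 * zl + l) = -1) : normSq zl = 1 / 2 := by
  have hzl₀ : zl ≠ 0 := fun h ↦ by simp [h] at hzl
  have hinv : 2 * zl + l = -1 / zl := by
    rw [eq_div_iff hzl₀, mul_comm, hmul]
  have him : 2 * zl.im = zl.im / normSq zl := by
    simpa using congrArg im hinv |>.trans (im_neg_one_div zl)
  have hpos : 0 < normSq zl := normSq_pos.mpr hzl₀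
  field_simp at him
  linarith [mul_pos hzl hpos]

lemma neg_one_div_sub_eq {zl c w : ℂ} (hmul : zl * c = -1) (hw : w ≠ 0) :
    -1 / w - zl = -zl * (w - c) / w := by
  field_simp
  linear_combination -hmul

lemma sq_norm_neg_one_div_sub_div_im {zl c w : ℂ} (hmul : zl * c = -1) (hw : w ≠ 0) :
    ‖-1 / w - zl‖ ^ 2 / (-1 / w).im = normSq zl * ‖w - c‖ ^ 2 / w.im := by
  have hw' : normSq w ≠ 0 := (normSq_pos.mpr hw).ne'
  rw [neg_one_div_sub_eq hmul hw, im_neg_one_div, norm_div, norm_mul, norm_neg, div_pow, mul_pow,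
    Complex.sq_norm, Complex.sq_norm, Complex.sq_norm]
  field_simp

lemma div_sqrt_mul_sqrt_div (a : ℂ) {y : ℝ} (hy : 0 < y) (Y : ℝ) :
    a / (√y : ℂ) * (√(y / Y) : ℂ) = a / (√Y : ℂ) := by
  have hy' : (√y : ℂ) ≠ 0 := ofReal_ne_zero.mpr (Real.sqrt_pos.mpr hy).ne'
  rw [Real.sqrt_div hy.le, ofReal_div]
  field_simp

lemma sq_norm_div_sqrt (a : ℂ) {Y : ℝ} (hY : 0 ≤ Y) : ‖a / (√Y : ℂ)‖ ^ 2 = ‖a‖ ^ 2 / Y := by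
  rw [norm_div, div_pow, norm_real, Real.norm_of_nonneg (Real.sqrt_nonneg Y), Real.sq_sqrt hY]

end Complex

/-- The key identity for the weight function cd(z) = |z - z_λ|²/Im z under the
tree recursion Ψ(z₁,z₂) = -1/(z₁+z₂+λ), where z_λ ∈ ℍ is the fixed point of
z ↦ -1/(2z+λ): cd(Ψ(z₁,z₂)) = (1/2)|z₁+z₂-2z_λ|²/(y₁+y₂) = (1/2)|⟨u,v⟩|². -/
theorem cd_recursion_identity (l : ℝ) (zl z₁ z₂ : ℂ) (hzl : 0 < zl.im)
    (hfix : zl = -1 / (2 * zl + (l : ℂ)))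
    (h1 : 0 < z₁.im) (h2 : 0 < z₂.im) :
    ‖(-1 / (z₁ + z₂ + (l : ℂ)) - zl)‖ ^ 2 / (-1 / (z₁ + z₂ + (l : ℂ))).im
      = (1 / 2) * ‖(z₁ + z₂ - 2 * zl)‖ ^ 2 / (z₁.im + z₂.im) ∧
    (1 / 2) * ‖(z₁ + z₂ - 2 * zl)‖ ^ 2 / (z₁.im + z₂.im)
      = (1 / 2) * ‖
          ((z₁ - zl) / (Real.sqrt z₁.im : ℂ) * (Real.sqrt (z₁.im / (z₁.im + z₂.im)) : ℂ)
            + (z₂ - zl) / (Real.sqrt z₂.im : ℂ) * (Real.sqrt (z₂.im / (z₁.im + z₂.im)) : ℂ))‖ ^ 2 := by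
  have hY : 0 < z₁.im + z₂.im := add_pos h1 h2
  have hwim : (z₁ + z₂ + (l : ℂ)).im = z₁.im + z₂.im := by simp
  have hw : z₁ + z₂ + (l : ℂ) ≠ 0 := ne_of_apply_ne Complex.im (by rw [hwim]; simpa using hY.ne')
  have hc : 2 * zl + (l : ℂ) ≠ 0 := ne_of_apply_ne Complex.im (by simpa using hzl.ne')
  have hmul : zl * (2 * zl + l) = -1 := by
    nth_rewrite 1 [hfix]
    exact div_mul_cancel₀ _ hc
  constructor
  · rw [Complex.sq_norm_neg_one_div_sub_div_im hmul hw,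
      Complex.normSq_eq_half_of_mul_eq_neg_one hzl hmul,
      hwim, show z₁ + z₂ + (l : ℂ) - (2 * zl + l) = z₁ + z₂ - 2 * zl by ring]
  · rw [Complex.div_sqrt_mul_sqrt_div _ h1, Complex.div_sqrt_mul_sqrt_div _ h2, ← add_div,
      show z₁ - zl + (z₂ - zl) = z₁ + z₂ - 2 * zl by ring,
      Complex.sq_norm_div_sqrt _ hY.le, mul_div_assoc]
end
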